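/- Let G be a connected graph of order n, minimum degree δ and maximum degree Δ. If Δ > n/2 − 1, then the proximity satisfies π(G) ≤ 3(n−Δ)²/(2(n−1)(δ+1)) + 13/2. -/

import Mathlib

/-!
Take a vertex `v` of maximum degree `Δ`. If some vertex lies at distance at least `3j + 2` from
`v`, a shortest path to it passes through vertices at distances `0, 3, …, 3j` from `v`; their
closed neighbourhoods are pairwise disjoint and contain no vertex at distance `≥ 3j + 2`. So at
most `M - jq` vertices lie that far, where `M = n - 1 - Δ` and `q = δ + 1`. A vertex at distance
`d` is counted for `⌊(d + 1) / 3⌋ ≥ (d - 1) / 3` values of `j`, hence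
`∑ᵤ d(v, u) ≤ n + 3 ∑ⱼ max(0, M - jq) ≤ n + 3 (M + q/2)² / (2q)`, the last step by
telescoping.
-/

open Finset

namespace SimpleGraph

variable {V : Type*} {G : SimpleGraph V} {u v w x : V}

lemma Walk.dist_getVert_le (p : G.Walk u v) (t : ℕ) : G.dist u (p.getVert t) ≤ t :=
  (dist_le (p.take t)).trans (by simp)

lemma Walk.dist_getVert_le_length_sub (p : G.Walk u v) (t : ℕ) :
    G.dist (p.getVert t) v ≤ p.length - t :=
  (dist_le (p.drop t)).trans (by simp)

lemma Reachable.exists_dist_eq_of_le (h : G.Reachable u v) {t : ℕ} (ht : t ≤ G.dist u v) :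
    ∃ w, G.dist u w = t := by
  obtain ⟨p, hp⟩ := h.exists_walk_length_eq_dist
  refine ⟨p.getVert t, le_antisymm (p.dist_getVert_le t) ?_⟩
  have htri := Reachable.dist_triangle_left ⟨p.take t⟩ v
  have := p.dist_getVert_le_length_sub t
  omega

lemma dist_lt_card [Fintype V] (u v : V) : G.dist u v < Fintype.card V := by
  by_cases h : G.Reachable u v
  · obtain ⟨p, hp, hlen⟩ := h.exists_path_of_dist
    exact hlen ▸ hp.length_lt
  · rw [dist_eq_zero_of_not_reachable h]
    exact Fintype.card_pos_iff.2 ⟨u⟩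

section Packing

variable [Fintype V] [DecidableEq V] [DecidableRel G.Adj]

variable (G) in
def closedNeighborFinset (v : V) : Finset V := insert v (G.neighborFinset v)

lemma card_closedNeighborFinset (v : V) : #(G.closedNeighborFinset v) = G.degree v + 1 := by
  rw [closedNeighborFinset, card_insert_of_notMem (G.notMem_neighborFinset_self v),
    card_neighborFinset_eq_degree]

lemma dist_le_dist_add_one_of_mem_closedNeighborFinset (hx : x ∈ G.closedNeighborFinset w) :
    G.dist v x ≤ G.dist v w + 1 ∧ G.dist v w ≤ G.dist v x + 1 := by
  rcases mem_insert.1 hx with rfl | hx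
  · omega
  · rcases ((G.mem_neighborFinset w x).1 hx).diff_dist_adj (u := v) with h | h | h <;> omega

lemma sum_degree_add_card_far_le (v : V) (j : ℕ) (w : ℕ → V)
    (hw : ∀ i ∈ range (j + 1), G.dist v (w i) = 3 * i) :
    ∑ i ∈ range (j + 1), (G.degree (w i) + 1) + #{u | 3 * j + 2 ≤ G.dist v u}
      ≤ Fintype.card V := by
  set far : Finset V := {u | 3 * j + 2 ≤ G.dist v u}
  have hlayer : ∀ i ∈ range (j + 1), ∀ x ∈ G.closedNeighborFinset (w i),
      3 * i ≤ G.dist v x + 1 ∧ G.dist v x ≤ 3 * i + 1 ∧ i ≤ j := fun i hi x hx => by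
    have := dist_le_dist_add_one_of_mem_closedNeighborFinset (v := v) hx
    have := hw i hi
    have := mem_range.1 hi
    omega
  have hdisj : (range (j + 1) : Set ℕ).PairwiseDisjoint (G.closedNeighborFinset ∘ w) :=
    fun a ha b hb _ => Finset.disjoint_left.2 fun x hxa hxb => by
      have := hlayer a (mem_coe.1 ha) x hxa
      have := hlayer b (mem_coe.1 hb) x hxb
      omega
  have hfar : Disjoint ((range (j + 1)).biUnion (G.closedNeighborFinset ∘ w)) far := by
    refine Finset.disjoint_left.2 fun x hx hxfar => ?_
    obtain ⟨i, hi, hxi⟩ := mem_biUnion.1 hx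
    have := hlayer i hi x hxi
    have := (mem_filter.1 hxfar).2
    omega
  calc ∑ i ∈ range (j + 1), (G.degree (w i) + 1) + #far
      = #((range (j + 1)).biUnion (G.closedNeighborFinset ∘ w) ∪ far) := by
        simp [card_union_of_disjoint hfar, card_biUnion hdisj, card_closedNeighborFinset]
    _ ≤ Fintype.card V := card_le_univ _

lemma Connected.degree_add_card_far_le (hG : G.Connected) (v : V) (j : ℕ)
    (hfar : ∃ u, 3 * j + 2 ≤ G.dist v u) :
    G.degree v + 1 + j * (G.minDegree + 1) + #{u | 3 * j + 2 ≤ G.dist v u}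
      ≤ Fintype.card V := by
  obtain ⟨u, hu⟩ := hfar
  have hex : ∀ i ∈ range (j + 1), ∃ w, G.dist v w = 3 * i := fun i hi =>
    (hG v u).exists_dist_eq_of_le (by have := mem_range.1 hi; omega)
  have : Nonempty V := ⟨v⟩
  choose! w hw using hex
  have hw0 : w 0 = v := (hG.dist_eq_zero_iff.1 (hw 0 (by simp))).symm
  have hpack := sum_degree_add_card_far_le v j w hw
  rw [sum_range_succ', hw0] at hpack
  have hmin : j * (G.minDegree + 1) ≤ ∑ i ∈ range j, (G.degree (w (i + 1)) + 1) := by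
    simpa using sum_le_sum (s := range j) fun i _ =>
      Nat.add_le_add_right (G.minDegree_le_degree (w (i + 1))) 1
  omega

end Packing

end SimpleGraph

/-- Each `a` is counted `⌊(f a + 1) / 3⌋` times on the right. -/
lemma Finset.sum_le_card_add_three_mul_sum_card_filter {α : Type*} (s : Finset α) (f : α → ℕ)
    (N : ℕ) (hf : ∀ a ∈ s, f a < N) :
    ∑ a ∈ s, f a ≤ #s + 3 * ∑ j ∈ range N, #{a ∈ s | 3 * j + 2 ≤ f a} := by
  have hcount : ∀ a ∈ s, f a ≤ 1 + 3 * #{j ∈ range N | 3 * j + 2 ≤ f a} := by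
    intro a ha
    have hfa := hf a ha
    have : {j ∈ range N | 3 * j + 2 ≤ f a} = range ((f a + 1) / 3) := by
      ext j
      simp only [mem_filter, mem_range]
      omega
    rw [this, card_range]
    omega
  calc ∑ a ∈ s, f a ≤ ∑ a ∈ s, (1 + 3 * #{j ∈ range N | 3 * j + 2 ≤ f a}) :=
        sum_le_sum hcount
    _ = #s + 3 * ∑ j ∈ range N, #{a ∈ s | 3 * j + 2 ≤ f a} := by
      rw [sum_add_distrib, ← mul_sum, card_eq_sum_ones s]
      congr 2
      exact sum_card_bipartiteAbove_eq_sum_card_bipartiteBelow _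

lemma two_mul_max_sub_half_le_sq_sub_sq (a q : ℝ) (hq : 0 < q) :
    2 * q * max 0 (a - q / 2) ≤ max 0 a ^ 2 - max 0 (a - q) ^ 2 := by
  rcases le_or_gt a (q / 2) with ha | ha
  · have : max 0 (a - q) ≤ max 0 a := max_le_max le_rfl (by linarith)
    rw [max_eq_left (by linarith)]
    nlinarith [le_max_left 0 (a - q)]
  rcases le_or_gt a q with ha' | ha'
  · rw [max_eq_right (by linarith), max_eq_right (by linarith), max_eq_left (by linarith)]
    nlinarith [sq_nonneg (a - q)]
  · rw [max_eq_right (by linarith), max_eq_right (by linarith), max_eq_right (by linarith)]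
    nlinarith

lemma sum_range_max_sub_mul_le (M q : ℝ) (hM : 0 ≤ M) (hq : 0 < q) (N : ℕ) :
    ∑ j ∈ range N, max 0 (M - j * q) ≤ (M + q / 2) ^ 2 / (2 * q) := by
  set g : ℕ → ℝ := fun j => max 0 (M + q / 2 - j * q) ^ 2 / (2 * q)
  calc ∑ j ∈ range N, max 0 (M - j * q) ≤ ∑ j ∈ range N, (g j - g (j + 1)) := by
        refine sum_le_sum fun j _ => ?_
        have key := two_mul_max_sub_half_le_sq_sub_sq (M + q / 2 - j * q) q hq
        have hshift : M + q / 2 - ((j + 1 : ℕ) : ℝ) * q = M + q / 2 - j * q - q := by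
          push_cast; ring
        rw [show M + q / 2 - j * q - q / 2 = M - j * q by ring] at key
        simp only [g, hshift, ← sub_div]
        rw [le_div_iff₀ (by positivity), mul_comm]
        exact key
    _ = g 0 - g N := sum_range_sub' g N
    _ ≤ g 0 := sub_le_self _ (by positivity)
    _ = (M + q / 2) ^ 2 / (2 * q) := by simp [g, max_eq_right (by positivity : 0 ≤ M + q / 2)]

namespace SimpleGraph

variable {V : Type*} [Fintype V] [DecidableEq V] {G : SimpleGraph V} [DecidableRel G.Adj]

theorem Connected.sum_dist_le (hG : G.Connected) (v : V) :
    ∑ u, (G.dist v u : ℝ) ≤ Fintype.card V + 3 * (((Fintype.card V - 1 - G.degree v : ℝ)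
      + (G.minDegree + 1) / 2) ^ 2 / (2 * (G.minDegree + 1))) := by
  set n := Fintype.card V
  set M : ℝ := n - 1 - G.degree v
  set q : ℝ := G.minDegree + 1
  have hM : 0 ≤ M := by
    have : (G.degree v : ℝ) + 1 ≤ n := by exact_mod_cast G.degree_lt_card_verts v
    linarith
  have hfar : ∀ j ∈ range n, (#{u | 3 * j + 2 ≤ G.dist v u} : ℝ) ≤ max 0 (M - j * q) := by
    intro j _
    by_cases hne : ∃ u, 3 * j + 2 ≤ G.dist v u
    · have : (G.degree v + 1 + j * (G.minDegree + 1) + #{u | 3 * j + 2 ≤ G.dist v u} : ℝ)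
          ≤ n := by exact_mod_cast hG.degree_add_card_far_le v j hne
      exact le_max_of_le_right (by linarith)
    · push Not at hne
      simp [filter_false_of_mem fun u _ => not_le.2 (hne u)]
  calc ∑ u, (G.dist v u : ℝ) = ((∑ u, G.dist v u : ℕ) : ℝ) := by push_cast; rfl
    _ ≤ ((n + 3 * ∑ j ∈ range n, #{u | 3 * j + 2 ≤ G.dist v u} : ℕ) : ℝ) := by
      exact_mod_cast
        sum_le_card_add_three_mul_sum_card_filter univ _ n fun u _ => dist_lt_card v u
    _ = n + 3 * ∑ j ∈ range n, (#{u | 3 * j + 2 ≤ G.dist v u} : ℝ) := by push_cast; rfl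
    _ ≤ n + 3 * ∑ j ∈ range n, max 0 (M - j * q) := by gcongr with j hj; exact hfar j hj
    _ ≤ n + 3 * ((M + q / 2) ^ 2 / (2 * q)) := by
      gcongr
      exact sum_range_max_sub_mul_le M q hM (by positivity) n

end SimpleGraph

lemma div_le_of_le_add_three_mul_sq_div {n Δ δ S : ℝ} (hn : 1 ≤ n) (hΔ : 0 ≤ Δ)
    (hΔn : Δ + 1 ≤ n) (hδ : 0 ≤ δ) (hδn : δ + 1 ≤ n)
    (hS : S ≤ n + 3 * ((n - 1 - Δ + (δ + 1) / 2) ^ 2 / (2 * (δ + 1)))) :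
    S / (n - 1) ≤ 3 * (n - Δ) ^ 2 / (2 * (n - 1) * (δ + 1)) + 13 / 2 := by
  rcases hn.eq_or_lt with rfl | hn
  · norm_num -- both sides divide by `n - 1 = 0`, leaving `0 ≤ 13 / 2`
  have hn1 : 0 < n - 1 := by linarith
  have hq : 0 < δ + 1 := by linarith
  have hrhs : 3 * (n - Δ) ^ 2 / (2 * (n - 1) * (δ + 1)) + 13 / 2
      = (3 * (n - Δ) ^ 2 + 13 * (n - 1) * (δ + 1)) / (2 * (δ + 1)) / (n - 1) := by
    field_simp
  have hlhs : n + 3 * ((n - 1 - Δ + (δ + 1) / 2) ^ 2 / (2 * (δ + 1)))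
      = (2 * (δ + 1) * n + 3 * (n - 1 - Δ + (δ + 1) / 2) ^ 2) / (2 * (δ + 1)) := by
    field_simp
  rw [hrhs]
  refine div_le_div_of_nonneg_right ((hS.trans_eq hlhs).trans ?_) hn1.le
  refine div_le_div_of_nonneg_right ?_ (by positivity)
  nlinarith [mul_nonneg hq.le (by linarith : (0:ℝ) ≤ n - 1 - Δ),
    mul_nonneg hq.le (by linarith : (0:ℝ) ≤ n - δ - 1), mul_nonneg hq.le hn1.le]

theorem proximity_bound_large_maxDegree_general {V : Type*} [Fintype V] [Nonempty V]
    (G : SimpleGraph V) [DecidableRel G.Adj] (hG : G.Connected)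
    (n δ Δ : ℕ) (hn : Fintype.card V = n)
    (hδ : G.minDegree = δ) (hΔ : G.maxDegree = Δ) :
    Finset.univ.inf' Finset.univ_nonempty
        (fun v => (∑ u, (G.dist v u : ℝ)) / (n - 1)) ≤
      3 * ((n : ℝ) - Δ) ^ 2 / (2 * ((n : ℝ) - 1) * ((δ : ℝ) + 1)) + 13 / 2 := by
  classical
  obtain ⟨v, hv⟩ := G.exists_maximal_degree_vertex
  have hΔn : Δ + 1 ≤ n := hn ▸ hΔ ▸ hv ▸ G.degree_lt_card_verts v
  have hδn : δ + 1 ≤ n :=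
    hn ▸ hδ ▸ (G.minDegree_le_degree v).trans_lt (G.degree_lt_card_verts v)
  have hsum := hG.sum_dist_le v
  rw [hn, hδ, ← hv, hΔ] at hsum
  exact (inf'_le _ (mem_univ v)).trans <| div_le_of_le_add_three_mul_sq_div
    (by norm_cast; omega) (by positivity) (by exact_mod_cast hΔn) (by positivity)
    (by exact_mod_cast hδn) hsum

theorem proximity_bound_large_maxDegree {V : Type*} [Fintype V] [Nonempty V]
    [DecidableEq V] (G : SimpleGraph V) [DecidableRel G.Adj] (hG : G.Connected)
    (n δ Δ : ℕ) (hn : Fintype.card V = n)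
    (hδ : G.minDegree = δ) (hΔ : G.maxDegree = Δ)
    (hbig : (Δ : ℝ) > (n : ℝ) / 2 - 1) :
    Finset.univ.inf' Finset.univ_nonempty
        (fun v => (∑ u, (G.dist v u : ℝ)) / (n - 1)) ≤
      3 * ((n : ℝ) - Δ) ^ 2 / (2 * ((n : ℝ) - 1) * ((δ : ℝ) + 1)) + 13 / 2 :=
  proximity_bound_large_maxDegree_general G hG n δ Δ hn hδ hΔ
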